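/- Let A and J be N×N complex matrices such that Aᴴ·J + J·A = 0, let p be a polynomial with real coefficients, and suppose that the matrices p(A) and p(−A) are invertible. Then the rational function R = (p(−A))⁻¹ · p(A) belongs to the quadratic Lie group associated with J: Rᴴ · J · R = J. In particular, diagonal Padé approximants r_{m,m}(A) = (p_{m,m}(−A))⁻¹ · p_{m,m}(A) preserve the quadratic Lie group structure. -/

import Mathlib

/-!
Since `p` has real coefficients, `p(A)ᴴ = p(Aᴴ)`, and `J A = -Aᴴ J` lets `J` pass through any
polynomial in `A`: `J p(A) = p(-A)ᴴ J` and `J p(-A) = p(A)ᴴ J`. As `p(A)` and `p(-A)` commute,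
`Rᴴ J R = p(A)ᴴ p(-A)ᴴ⁻¹ J p(A) p(-A)⁻¹ = p(A)ᴴ J p(-A)⁻¹ = J p(-A) p(-A)⁻¹ = J`.
-/

open Matrix Polynomial

namespace Polynomial

variable {R A : Type*} [CommSemiring R]

theorem semiconjBy_aeval [Semiring A] [Algebra R A] {a x y : A} (h : SemiconjBy a x y)
    (p : R[X]) : SemiconjBy a (aeval x p) (aeval y p) := by
  induction p using Polynomial.induction_on' with
  | add q r hq hr => simpa only [map_add] using hq.add_right hr
  | monomial n c =>
    simp only [aeval_monomial]
    exact SemiconjBy.mul_right (Algebra.commutes c a).symm (h.pow_right n)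

theorem commute_aeval_aeval [Semiring A] [Algebra R A] {x y : A} (h : Commute x y)
    (p q : R[X]) : Commute (aeval x p) (aeval y q) :=
  (semiconjBy_aeval (semiconjBy_aeval h q).symm p).symm

theorem star_aeval [StarRing R] [TrivialStar R] [Semiring A] [StarRing A] [Algebra R A]
    [StarModule R A] (x : A) (p : R[X]) : star (aeval x p) = aeval (star x) p := by
  induction p using Polynomial.induction_on' with
  | add q r hq hr => simp only [map_add, star_add, hq, hr]
  | monomial n c =>
    rw [aeval_monomial, aeval_monomial, star_mul, star_pow, ← algebraMap_star_comm, star_trivial c]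
    exact (Algebra.commutes c _).symm

theorem semiconjBy_aeval_of_star_mul_add_mul_eq_zero [StarRing R] [TrivialStar R] [Ring A]
    [StarRing A] [Algebra R A] [StarModule R A] {a j : A} (ha : star a * j + j * a = 0)
    (p : R[X]) : SemiconjBy j (aeval a p) (star (aeval (-a) p)) := by
  rw [star_aeval]
  refine semiconjBy_aeval ?_ p
  rw [SemiconjBy, star_neg, neg_mul]
  exact eq_neg_of_add_eq_zero_right ha

end Polynomial

theorem Matrix.conjTranspose_mul_mul_eq_of_semiconjBy {n α : Type*} [Fintype n] [DecidableEq n]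
    [CommRing α] [StarRing α] {J P Q : Matrix n n α} (hPQ : Commute P Q) (hQ : IsUnit Q.det)
    (hJP : SemiconjBy J P Qᴴ) (hJQ : SemiconjBy J Q Pᴴ) :
    (Q⁻¹ * P)ᴴ * J * (Q⁻¹ * P) = J := by
  have hQP : Q⁻¹ * P = P * Q⁻¹ := by
    calc Q⁻¹ * P = Q⁻¹ * (P * Q) * Q⁻¹ := by
          rw [Matrix.mul_assoc, Matrix.mul_assoc, mul_nonsing_inv _ hQ, Matrix.mul_one]
      _ = P * Q⁻¹ := by rw [hPQ.eq, nonsing_inv_mul_cancel_left _ _ hQ]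
  have hQH : IsUnit Qᴴ.det := by rw [det_conjTranspose]; exact hQ.star
  calc (Q⁻¹ * P)ᴴ * J * (Q⁻¹ * P) = Pᴴ * (Qᴴ⁻¹ * (J * P)) * Q⁻¹ := by
        rw [conjTranspose_mul, hQP, conjTranspose_nonsing_inv]; simp only [Matrix.mul_assoc]
    _ = Pᴴ * J * Q⁻¹ := by rw [hJP.eq, nonsing_inv_mul_cancel_left _ _ hQH]
    _ = J := by rw [← hJQ.eq, mul_nonsing_inv_cancel_right _ _ hQ]

theorem pade_preserves_quadratic_lie_group_general (N : ℕ) (A J : Matrix (Fin N) (Fin N) ℂ)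
    (hA : Aᴴ * J + J * A = 0) (p : Polynomial ℝ)
    (h₂ : IsUnit (Polynomial.aeval (-A) p)) :
    ((Polynomial.aeval (-A) p)⁻¹ * Polynomial.aeval A p)ᴴ * J *
      ((Polynomial.aeval (-A) p)⁻¹ * Polynomial.aeval A p) = J := by
  have hA' : star (-A) * J + J * -A = 0 := by
    rw [star_neg, neg_mul, mul_neg, ← neg_add, star_eq_conjTranspose, hA, neg_zero]
  have hJQ := semiconjBy_aeval_of_star_mul_add_mul_eq_zero hA' p
  rw [neg_neg, star_eq_conjTranspose] at hJQ
  exact conjTranspose_mul_mul_eq_of_semiconjBy (commute_aeval_aeval (Commute.refl A).neg_right p p)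
    ((isUnit_iff_isUnit_det _).mp h₂) (semiconjBy_aeval_of_star_mul_add_mul_eq_zero hA p) hJQ

/-- If `A` belongs to the quadratic Lie algebra of `J` and `p` is a real polynomial
with `p(A)` and `p(−A)` invertible, then `R = (p(−A))⁻¹ p(A)` belongs to the
quadratic Lie group of `J`: `Rᴴ J R = J`.  In particular diagonal Padé
approximants preserve the quadratic Lie group structure. -/
theorem pade_preserves_quadratic_lie_group (N : ℕ) (A J : Matrix (Fin N) (Fin N) ℂ)
    (hA : Aᴴ * J + J * A = 0) (p : Polynomial ℝ)
    (h₁ : IsUnit (Polynomial.aeval A p))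
    (h₂ : IsUnit (Polynomial.aeval (-A) p)) :
    ((Polynomial.aeval (-A) p)⁻¹ * Polynomial.aeval A p)ᴴ * J *
      ((Polynomial.aeval (-A) p)⁻¹ * Polynomial.aeval A p) = J :=
  pade_preserves_quadratic_lie_group_general N A J hA p h₂
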